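/- arXiv:2205.03851 — 9 statements merged into one kernel-verified Lean document; each statement's English description precedes it below -/
import Mathlib

section
/- Let m, n, N, N' be positive integers and let p = (p_{i,j})_{0≤i≤m,0≤j≤n} be positive reals summing to 1, with row sums p_i = Σ_{j=0}^n p_{i,j}. Then the risk difference satisfies Δ_p(N, N') = log((N + N' + (1+m)(1+n)/2)/(N + (1+m)(1+n)/2)) + Σ_{i=0}^m p_i · E[log((X_i + (1+n)/2)/(X_i + Y_i + (1+n)/2))], where for each i, X_i ~ Binomial(N, p_i) and Y_i ~ Binomial(N', p_i) are independent, and the expectations are finite sums against the binomial probability mass functions. -/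
open Finset

/-- Binomial(N, q) probability mass function at `x`. -/
noncomputable def binPMF (N : ℕ) (q : ℝ) (x : ℕ) : ℝ :=
  (N.choose x : ℝ) * q ^ x * (1 - q) ^ (N - x)

/-- The entropy loss `L(d, p) = ∑ᵢ ∑ⱼ pᵢⱼ log (pᵢⱼ / dᵢⱼ)`. -/
noncomputable def entropyLoss {m n : ℕ} (d p : Fin (m+1) → Fin (n+1) → ℝ) : ℝ :=
  ∑ i, ∑ j, p i j * Real.log (p i j / d i j)

/-- Support of the Multinomial(N, p) distribution on (1+m)(1+n) cells. -/
def suppX (m n N : ℕ) : Finset (Fin (m+1) → Fin (n+1) → Fin (N+1)) :=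
  Finset.univ.filter fun x => ∑ i, ∑ j, (x i j : ℕ) = N

/-- Support of the Multinomial(N', p·) distribution on 1+m cells. -/
def suppY (m N' : ℕ) : Finset (Fin (m+1) → Fin (N'+1)) :=
  Finset.univ.filter fun y => ∑ i, (y i : ℕ) = N'

/-- Multinomial(N, p) probability of the outcome `x`. -/
noncomputable def wX {m n N : ℕ} (p : Fin (m+1) → Fin (n+1) → ℝ)
    (x : Fin (m+1) → Fin (n+1) → Fin (N+1)) : ℝ :=
  (Nat.multinomial Finset.univ (fun k : Fin (m+1) × Fin (n+1) => (x k.1 k.2 : ℕ)) : ℝ) *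
    ∏ i, ∏ j, p i j ^ (x i j : ℕ)

/-- Multinomial(N', (pᵢ.)ᵢ) probability of the outcome `y`, where `pᵢ. = ∑ⱼ pᵢⱼ`. -/
noncomputable def wY {m n N' : ℕ} (p : Fin (m+1) → Fin (n+1) → ℝ)
    (y : Fin (m+1) → Fin (N'+1)) : ℝ :=
  (Nat.multinomial Finset.univ (fun i => (y i : ℕ)) : ℝ) *
    ∏ i, (∑ j, p i j) ^ (y i : ℕ)

/-- The estimator `p̃` based on the direct observations only. -/
noncomputable def ptilde {m n N : ℕ} (x : Fin (m+1) → Fin (n+1) → Fin (N+1)) :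
    Fin (m+1) → Fin (n+1) → ℝ :=
  fun i j => ((x i j : ℝ) + 1/2) / ((N : ℝ) + (1 + m) * (1 + n) / 2)

/-- The estimator `p̂` based on the direct and aggregated observations. -/
noncomputable def phat {m n N N' : ℕ} (x : Fin (m+1) → Fin (n+1) → Fin (N+1))
    (y : Fin (m+1) → Fin (N'+1)) : Fin (m+1) → Fin (n+1) → ℝ :=
  fun i j =>
    ((((∑ j', (x i j' : ℕ)) : ℕ) : ℝ) + (y i : ℝ) + (1 + n) / 2) /
        ((N : ℝ) + (N' : ℝ) + (1 + m) * (1 + n) / 2) *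
      (((x i j : ℝ) + 1/2) / ((((∑ j', (x i j' : ℕ)) : ℕ) : ℝ) + (1 + n) / 2))

/-- The risk difference `Δ_p(N, N') = E_p[L(p̂, p)] − E_p[L(p̃, p)]`, the expectation being
a finite sum over the supports of the independent multinomial observations. -/
noncomputable def riskDiff (m n : ℕ) (p : Fin (m+1) → Fin (n+1) → ℝ) (N N' : ℕ) : ℝ :=
  ∑ x ∈ suppX m n N, ∑ y ∈ suppY m N',
    wX p x * wY p y * (entropyLoss (phat x y) p - entropyLoss (ptilde x) p)

/-! The loss difference is `∑ p_ij log (p̃_ij / p̂_ij)`, and the ratio `p̃_ij / p̂_ij` splits into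
a constant depending only on `N, N'` and a factor depending only on the row totals `X_i, Y_i`.
So the risk difference is that constant plus `∑ p_i E[g(X_i, Y_i)]`, and it remains to see that
the row total of a multinomial vector is binomial. That follows by comparing coefficients in
`∑_k multinomial(k) ∏ q_i^{k_i} t^{∑_{i ∈ T} k_i} = (t ∑_{i ∈ T} q_i + ∑_{i ∉ T} q_i)^N`. -/

open Polynomial

section Multinomial

variable {ι R : Type*} [Fintype ι] [DecidableEq ι] [CommSemiring R]

theorem sum_piAntidiag_multinomial_mul_X_pow (q : ι → R) (T : Finset ι) (N : ℕ) :
    ∑ k ∈ piAntidiag univ N,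
        C ((Nat.multinomial univ k : R) * ∏ i, q i ^ k i) * X ^ (∑ i ∈ T, k i) =
      (C (∑ i ∈ T, q i) * X + C (∑ i ∈ Tᶜ, q i)) ^ N := by
  have hsplit : C (∑ i ∈ T, q i) * X + C (∑ i ∈ Tᶜ, q i) =
      ∑ i, C (q i) * X ^ (if i ∈ T then 1 else 0) := by
    rw [← sum_add_sum_compl T, map_sum, map_sum, sum_mul]
    congr 1 <;> refine sum_congr rfl fun i hi => ?_
    · simp [hi]
    · simp [(mem_compl.mp hi)]
  rw [hsplit, sum_pow_eq_sum_piAntidiag]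
  refine sum_congr rfl fun k _ => ?_
  simp only [mul_pow, prod_mul_distrib, ← pow_mul, prod_pow_eq_pow_sum, ← C_pow, ← map_prod,
    map_mul, map_natCast]
  rw [mul_assoc]
  congr 2
  simp only [ite_mul, one_mul, zero_mul, sum_ite_mem, univ_inter]

theorem coeff_C_mul_X_add_C_pow (a b : R) (N u : ℕ) :
    ((C a * X + C b) ^ N).coeff u = N.choose u * a ^ u * b ^ (N - u) := by
  have hterm : ∀ k, (C a * X) ^ k * C b ^ (N - k) * (N.choose k : R[X]) =
      C (N.choose k * a ^ k * b ^ (N - k)) * X ^ k := fun k => by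
    simp only [mul_pow, ← C_pow, map_mul, map_natCast]; ring
  simp only [add_pow, hterm, finsetSum_coeff, coeff_C_mul_X_pow, sum_ite_eq, mem_range]
  split_ifs with hu
  · rfl
  · simp [Nat.choose_eq_zero_of_lt (by omega : N < u)]

theorem sum_piAntidiag_filter_multinomial (q : ι → R) (T : Finset ι) (N u : ℕ) :
    ∑ k ∈ piAntidiag univ N with ∑ i ∈ T, k i = u, (Nat.multinomial univ k : R) * ∏ i, q i ^ k i =
      N.choose u * (∑ i ∈ T, q i) ^ u * (∑ i ∈ Tᶜ, q i) ^ (N - u) := by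
  have hcoeff := congrArg (coeff · u) (sum_piAntidiag_multinomial_mul_X_pow q T N)
  simp only [finsetSum_coeff, coeff_C_mul_X_pow, coeff_C_mul_X_add_C_pow] at hcoeff
  rw [sum_filter, ← hcoeff]
  exact sum_congr rfl fun k _ => by simp only [eq_comm]

theorem sum_piAntidiag_multinomial_mul_apply_sum (q : ι → R) (T : Finset ι) (N : ℕ)
    (f : ℕ → R) :
    ∑ k ∈ piAntidiag univ N, (Nat.multinomial univ k : R) * (∏ i, q i ^ k i) * f (∑ i ∈ T, k i) =
      ∑ u ∈ range (N + 1),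
        N.choose u * (∑ i ∈ T, q i) ^ u * (∑ i ∈ Tᶜ, q i) ^ (N - u) * f u := by
  have hmaps : ∀ k ∈ piAntidiag univ N, ∑ i ∈ T, k i ∈ range (N + 1) := fun k hk => by
    rw [mem_range, Nat.lt_succ_iff, ← (mem_piAntidiag.mp hk).1]
    exact sum_le_sum_of_subset (subset_univ T)
  rw [← sum_fiberwise_of_maps_to hmaps]
  refine sum_congr rfl fun u _ => ?_
  rw [← sum_piAntidiag_filter_multinomial, sum_mul]
  exact sum_congr rfl fun k hk => by rw [(mem_filter.mp hk).2]

end Multinomial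

theorem sum_filter_sum_fin_eq_sum_piAntidiag {ι M : Type*} [Fintype ι] [DecidableEq ι]
    [AddCommMonoid M] (N : ℕ) (F : (ι → ℕ) → M) :
    ∑ x : ι → Fin (N + 1) with ∑ i, (x i : ℕ) = N, F (fun i => x i) =
      ∑ k ∈ piAntidiag univ N, F k := by
  refine sum_nbij (fun x i => x i) (fun x hx => ?_) (fun x _ y _ hxy => ?_) (fun k hk => ?_)
    (fun _ _ => rfl)
  · simpa using (mem_filter.mp hx).2
  · funext i; exact Fin.ext (congrFun hxy i)
  · have hle : ∀ i, k i < N + 1 := fun i => by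
      rw [Nat.lt_succ_iff, ← (mem_piAntidiag.mp hk).1]
      exact single_le_sum (fun _ _ => Nat.zero_le _) (mem_univ i)
    refine ⟨fun i => ⟨k i, hle i⟩, ?_, rfl⟩
    simpa using (mem_piAntidiag.mp hk).1

theorem sum_suppY_eq_sum_piAntidiag {M : Type*} [AddCommMonoid M] (m N' : ℕ)
    (F : (Fin (m + 1) → ℕ) → M) :
    ∑ y ∈ suppY m N', F (fun i => y i) = ∑ k ∈ piAntidiag univ N', F k :=
  sum_filter_sum_fin_eq_sum_piAntidiag N' F

theorem sum_suppX_eq_sum_piAntidiag {M : Type*} [AddCommMonoid M] (m n N : ℕ)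
    (F : (Fin (m + 1) × Fin (n + 1) → ℕ) → M) :
    ∑ x ∈ suppX m n N, F (fun ij => x ij.1 ij.2) = ∑ k ∈ piAntidiag univ N, F k := by
  rw [← sum_filter_sum_fin_eq_sum_piAntidiag]
  exact sum_equiv (Equiv.curry _ _ _).symm (by simp [suppX, Fintype.sum_prod_type])
    fun _ _ => rfl

section Marginals

variable {m n : ℕ} (p : Fin (m + 1) → Fin (n + 1) → ℝ)

theorem sum_suppY_wY_mul (hsum : ∑ i, ∑ j, p i j = 1) (N' : ℕ) (i : Fin (m + 1))
    (f : ℕ → ℝ) :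
    ∑ y ∈ suppY m N', wY p y * f (y i) =
      ∑ v ∈ range (N' + 1), binPMF N' (∑ j, p i j) v * f v := by
  have hcompl : ∑ i' ∈ {i}ᶜ, ∑ j, p i' j = 1 - ∑ j, p i j := by
    rw [← hsum, ← sum_compl_add_sum {i}, sum_singleton, add_sub_cancel_right]
  calc ∑ y ∈ suppY m N', wY p y * f (y i)
      = ∑ k ∈ piAntidiag univ N', (Nat.multinomial univ k : ℝ) *
          (∏ i', (∑ j, p i' j) ^ k i') * f (∑ i' ∈ {i}, k i') := by
        rw [← sum_suppY_eq_sum_piAntidiag]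
        simp only [wY, sum_singleton]
    _ = ∑ v ∈ range (N' + 1), binPMF N' (∑ j, p i j) v * f v := by
        rw [sum_piAntidiag_multinomial_mul_apply_sum, sum_singleton, hcompl]
        rfl

theorem sum_suppX_wX_mul (hsum : ∑ i, ∑ j, p i j = 1) (N : ℕ) (i : Fin (m + 1))
    (f : ℕ → ℝ) :
    ∑ x ∈ suppX m n N, wX p x * f (∑ j, (x i j : ℕ)) =
      ∑ u ∈ range (N + 1), binPMF N (∑ j, p i j) u * f u := by
  have hrow : ∀ q : Fin (m + 1) × Fin (n + 1) → ℝ,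
      ∑ ij ∈ {i} ×ˢ univ, q ij = ∑ j, q (i, j) := fun q => by
    rw [sum_product, sum_singleton]
  have hcompl : ∑ ij ∈ ({i} ×ˢ univ)ᶜ, p ij.1 ij.2 = 1 - ∑ j, p i j := by
    rw [← hsum, ← Fintype.sum_prod_type', ← sum_compl_add_sum ({i} ×ˢ univ), hrow,
      add_sub_cancel_right]
  calc ∑ x ∈ suppX m n N, wX p x * f (∑ j, (x i j : ℕ))
      = ∑ k ∈ piAntidiag univ N, (Nat.multinomial univ k : ℝ) *
          (∏ ij, p ij.1 ij.2 ^ k ij) * f (∑ ij ∈ {i} ×ˢ univ, k ij) := by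
        rw [← sum_suppX_eq_sum_piAntidiag]
        simp only [wX, sum_product, sum_singleton, Fintype.prod_prod_type]
    _ = ∑ u ∈ range (N + 1), binPMF N (∑ j, p i j) u * f u := by
        rw [sum_piAntidiag_multinomial_mul_apply_sum, hrow, hcompl]
        rfl

end Marginals

theorem sum_binPMF (N : ℕ) (q : ℝ) : ∑ u ∈ range (N + 1), binPMF N q u = 1 := by
  have h := add_pow q (1 - q) N
  rw [add_sub_cancel, one_pow] at h
  rw [h]
  exact sum_congr rfl fun u _ => by rw [binPMF]; ring

theorem sum_suppX_sum_suppY_wX_mul_wY_mul {m n : ℕ} (p : Fin (m + 1) → Fin (n + 1) → ℝ)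
    (hsum : ∑ i, ∑ j, p i j = 1) (N N' : ℕ) (i : Fin (m + 1)) (g : ℕ → ℕ → ℝ) :
    ∑ x ∈ suppX m n N, ∑ y ∈ suppY m N', wX p x * wY p y * g (∑ j, (x i j : ℕ)) (y i) =
      ∑ u ∈ range (N + 1), ∑ v ∈ range (N' + 1),
        binPMF N (∑ j, p i j) u * binPMF N' (∑ j, p i j) v * g u v := by
  simp only [mul_assoc, ← mul_sum, sum_suppY_wY_mul p hsum N' i]
  exact sum_suppX_wX_mul p hsum N i fun u =>
    ∑ v ∈ range (N' + 1), binPMF N' (∑ j, p i j) v * g u v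

theorem sum_suppX_sum_suppY_wX_mul_wY {m n : ℕ} (p : Fin (m + 1) → Fin (n + 1) → ℝ)
    (hsum : ∑ i, ∑ j, p i j = 1) (N N' : ℕ) :
    ∑ x ∈ suppX m n N, ∑ y ∈ suppY m N', wX p x * wY p y = 1 := by
  simpa only [mul_one, ← sum_mul, ← mul_sum, sum_binPMF] using
    sum_suppX_sum_suppY_wX_mul_wY_mul p hsum N N' 0 fun _ _ => 1

theorem mul_log_div_sub_mul_log_div (c : ℝ) {a b : ℝ} (ha : a ≠ 0) (hb : b ≠ 0) :
    c * Real.log (c / a) - c * Real.log (c / b) = c * Real.log (b / a) := by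
  rcases eq_or_ne c 0 with rfl | hc
  · simp
  rw [Real.log_div hc ha, Real.log_div hc hb, Real.log_div hb ha]
  ring

noncomputable def logRatio (n u v : ℕ) : ℝ :=
  Real.log (((u : ℝ) + (1 + n) / 2) / ((u : ℝ) + (v : ℝ) + (1 + n) / 2))

theorem entropyLoss_phat_sub_entropyLoss_ptilde {m n N N' : ℕ}
    (p : Fin (m + 1) → Fin (n + 1) → ℝ) (hsum : ∑ i, ∑ j, p i j = 1)
    (x : Fin (m + 1) → Fin (n + 1) → Fin (N + 1)) (y : Fin (m + 1) → Fin (N' + 1)) :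
    entropyLoss (phat x y) p - entropyLoss (ptilde x) p =
      Real.log (((N : ℝ) + (N' : ℝ) + (1 + m) * (1 + n) / 2) /
          ((N : ℝ) + (1 + m) * (1 + n) / 2)) +
        ∑ i, (∑ j, p i j) * logRatio n (∑ j, (x i j : ℕ)) (y i) := by
  have hterm : ∀ i j, p i j * Real.log (p i j / phat x y i j) -
      p i j * Real.log (p i j / ptilde x i j) =
      p i j * (Real.log (((N : ℝ) + (N' : ℝ) + (1 + m) * (1 + n) / 2) /
          ((N : ℝ) + (1 + m) * (1 + n) / 2)) + logRatio n (∑ j, (x i j : ℕ)) (y i)) := by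
    intro i j
    rw [mul_log_div_sub_mul_log_div _ (by unfold phat; positivity) (by unfold ptilde; positivity),
      logRatio, ← Real.log_mul (by positivity) (by positivity)]
    congr 2
    simp only [ptilde, phat]
    field_simp
  simp only [entropyLoss, ← sum_sub_distrib, hterm, ← sum_mul, mul_add, sum_add_distrib, hsum,
    one_mul]

theorem risk_difference_decomposition_general (m n N N' : ℕ)
    (p : Fin (m+1) → Fin (n+1) → ℝ)
    (hsum : ∑ i, ∑ j, p i j = 1) :
    riskDiff m n p N N' =
      Real.log (((N : ℝ) + (N' : ℝ) + (1 + m) * (1 + n) / 2) /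
          ((N : ℝ) + (1 + m) * (1 + n) / 2)) +
        ∑ i, (∑ j, p i j) *
          ∑ x ∈ Finset.range (N+1), ∑ y ∈ Finset.range (N'+1),
            binPMF N (∑ j, p i j) x * binPMF N' (∑ j, p i j) y *
              Real.log (((x : ℝ) + (1 + n) / 2) / ((x : ℝ) + (y : ℝ) + (1 + n) / 2)) := by
  set A := Real.log (((N : ℝ) + (N' : ℝ) + (1 + m) * (1 + n) / 2) /
    ((N : ℝ) + (1 + m) * (1 + n) / 2))
  calc riskDiff m n p N N'
      = ∑ x ∈ suppX m n N, ∑ y ∈ suppY m N', wX p x * wY p y *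
          (A + ∑ i, (∑ j, p i j) * logRatio n (∑ j, (x i j : ℕ)) (y i)) := by
        simp only [riskDiff, entropyLoss_phat_sub_entropyLoss_ptilde p hsum, A]
    _ = A * ∑ x ∈ suppX m n N, ∑ y ∈ suppY m N', wX p x * wY p y +
          ∑ i, (∑ j, p i j) * ∑ x ∈ suppX m n N, ∑ y ∈ suppY m N',
            wX p x * wY p y * logRatio n (∑ j, (x i j : ℕ)) (y i) := by
        simp only [mul_add, sum_add_distrib, mul_sum]
        rw [sum_comm_cycle]
        congr 1
        · exact sum_congr rfl fun _ _ => sum_congr rfl fun _ _ => mul_comm _ _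
        · exact sum_congr rfl fun _ _ => sum_congr rfl fun _ _ => sum_congr rfl
            fun _ _ => mul_left_comm _ _ _
    _ = _ := by
        rw [sum_suppX_sum_suppY_wX_mul_wY p hsum, mul_one]
        simp only [sum_suppX_sum_suppY_wX_mul_wY_mul p hsum N N' (g := logRatio n)]
        rfl

theorem risk_difference_decomposition (m n N N' : ℕ)
    (hm : 1 ≤ m) (hn : 1 ≤ n) (hN : 1 ≤ N) (hN' : 1 ≤ N')
    (p : Fin (m+1) → Fin (n+1) → ℝ) (hp : ∀ i j, 0 < p i j)
    (hsum : ∑ i, ∑ j, p i j = 1) :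
    riskDiff m n p N N' =
      Real.log (((N : ℝ) + (N' : ℝ) + (1 + m) * (1 + n) / 2) /
          ((N : ℝ) + (1 + m) * (1 + n) / 2)) +
        ∑ i, (∑ j, p i j) *
          ∑ x ∈ Finset.range (N+1), ∑ y ∈ Finset.range (N'+1),
            binPMF N (∑ j, p i j) x * binPMF N' (∑ j, p i j) y *
              Real.log (((x : ℝ) + (1 + n) / 2) / ((x : ℝ) + (y : ℝ) + (1 + n) / 2)) :=
  risk_difference_decomposition_general m n N N' p hsum
end

section
/- Let N ≥ 1 and n ≥ 3 be integers. Then the function H : (0,1) → (0,∞) defined by H(q) = q² · Σ_{x=0}^N C(N,x) q^x (1−q)^{N−x} · (− log(1 − 1/(x + 1 + (1+n)/2))) is convex on (0,1). -/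
/-!
Since `q² C(N,x) q^x (1-q)^(N-x) = (x+1)(x+2)/((N+1)(N+2)) · b_{N+2,x+2}(q)`, the function `H` is
the Bernstein polynomial of degree `N+2` whose `k`-th coefficient is proportional to
`φ(k) = k(k-1) log(1 + 1/(k+a))` with `a = (n-3)/2 ≥ 0` (the coefficients for `k = 0, 1` vanish).
The second derivative of a Bernstein polynomial is a nonnegative combination of the second
differences of its coefficients, so it suffices that `k ↦ φ(k)` is discretely convex. For `k ≥ 1`
this follows from convexity of `φ` on `(0, ∞)`: bounding `log(1 + 1/s) ≥ 2/(2s+1)` (the first term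
of its artanh series) turns `φ'' ≥ 0` into the positivity of a polynomial in `t` and `a`.
-/

open Finset

open Polynomial Real Set

namespace bernsteinPolynomial

variable {R : Type*} [CommRing R]

theorem derivative_sum_C_mul (n : ℕ) (a : ℕ → R) :
    derivative (∑ k ∈ range (n + 2), C (a k) * bernsteinPolynomial R (n + 1) k) =
      (n + 1 : R[X]) *
        ∑ k ∈ range (n + 1), C (a (k + 1) - a k) * bernsteinPolynomial R n k := by
  have hshift : ∑ k ∈ range (n + 1), C (a (k + 1)) * bernsteinPolynomial R n (k + 1) +
      C (a 0) * bernsteinPolynomial R n 0 =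
        ∑ k ∈ range (n + 1), C (a k) * bernsteinPolynomial R n k := by
    rw [← sum_range_succ' (fun k => C (a k) * bernsteinPolynomial R n k), sum_range_succ,
      eq_zero_of_lt R (lt_add_one n), mul_zero, add_zero]
  rw [derivative_sum, sum_range_succ']
  have hterm : ∀ k, C (a (k + 1)) * ((n + 1 : R[X]) *
      (bernsteinPolynomial R n k - bernsteinPolynomial R n (k + 1))) =
        (n + 1 : R[X]) * (C (a (k + 1)) * bernsteinPolynomial R n k) -
          (n + 1 : R[X]) * (C (a (k + 1)) * bernsteinPolynomial R n (k + 1)) := fun k => by ring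
  simp only [derivative_C_mul, derivative_succ_aux, derivative_zero, add_tsub_cancel_right,
    hterm, sum_sub_distrib, ← mul_sum, map_sub, sub_mul]
  push_cast
  linear_combination -(n + 1 : R[X]) * hshift

theorem derivative_derivative_sum_C_mul (n : ℕ) (a : ℕ → R) :
    derivative (derivative
      (∑ k ∈ range (n + 3), C (a k) * bernsteinPolynomial R (n + 2) k)) =
      (n + 2 : R[X]) * (n + 1 : R[X]) *
        ∑ k ∈ range (n + 1), C (a (k + 2) - 2 * a (k + 1) + a k) * bernsteinPolynomial R n k := by
  rw [derivative_sum_C_mul (n + 1), derivative_mul, derivative_sum_C_mul]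
  simp only [derivative_add, derivative_natCast, derivative_one, zero_mul, zero_add]
  push_cast
  rw [mul_assoc]
  congr 1
  · ring
  · refine congrArg _ (sum_congr rfl fun k _ => ?_)
    congr 2
    ring

end bernsteinPolynomial

theorem Polynomial.convexOn_eval_of_derivative_derivative_nonneg {p : ℝ[X]} {D : Set ℝ}
    (hD : Convex ℝ D) (h : ∀ x ∈ interior D, 0 ≤ (derivative (derivative p)).eval x) :
    ConvexOn ℝ D fun x => p.eval x :=
  convexOn_of_hasDerivWithinAt2_nonneg hD p.continuousOn
    (fun x _ => (p.hasDerivAt x).hasDerivWithinAt)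
    (fun x _ => (p.derivative.hasDerivAt x).hasDerivWithinAt) h

theorem bernsteinPolynomial.eval_nonneg {n k : ℕ} {q : ℝ} (hq : q ∈ Set.Icc 0 1) :
    0 ≤ (bernsteinPolynomial ℝ n k).eval q :=
  bernstein_nonneg (x := ⟨q, hq⟩)

theorem bernsteinPolynomial.convexOn_eval_sum_C_mul (n : ℕ) (a : ℕ → ℝ)
    (ha : ∀ k ≤ n, 0 ≤ a (k + 2) - 2 * a (k + 1) + a k) :
    ConvexOn ℝ (Set.Icc 0 1)
      fun q => (∑ k ∈ range (n + 3), C (a k) * bernsteinPolynomial ℝ (n + 2) k).eval q := by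
  refine convexOn_eval_of_derivative_derivative_nonneg (convex_Icc 0 1) fun q hq => ?_
  rw [interior_Icc] at hq
  rw [derivative_derivative_sum_C_mul, eval_mul, eval_finsetSum]
  refine mul_nonneg
    (by simp only [eval_mul, eval_add, eval_natCast, eval_ofNat, eval_one]; positivity)
    (sum_nonneg fun k hk => ?_)
  rw [eval_mul, eval_C]
  exact mul_nonneg (ha k (Nat.lt_succ_iff.mp (mem_range.mp hk)))
    (eval_nonneg (Ioo_subset_Icc_self hq))

theorem two_div_two_mul_add_one_le_log_sub_log {s : ℝ} (hs : 0 < s) :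
    2 / (2 * s + 1) ≤ log (s + 1) - log s := by
  have h := le_hasSum (hasSum_log_one_add_inv hs) 0 fun k _ => by positivity
  have hlog : log (1 + s⁻¹) = log (s + 1) - log s := by
    rw [← log_div (by positivity) hs.ne', add_div, div_self hs.ne', one_div]
  simpa [hlog, div_eq_mul_inv] using h

noncomputable def logRatioWeight (a t : ℝ) : ℝ :=
  t * (t - 1) * (log (t + a + 1) - log (t + a))

@[simp]
theorem logRatioWeight_zero (a : ℝ) : logRatioWeight a 0 = 0 := by simp [logRatioWeight]

@[simp]
theorem logRatioWeight_one (a : ℝ) : logRatioWeight a 1 = 0 := by simp [logRatioWeight]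

theorem logRatioWeight_deriv2_nonneg {a t : ℝ} (ha : 0 ≤ a) (ht : 0 < t) :
    0 ≤ 2 * (log (t + a + 1) - log (t + a)) + 2 * (2 * t - 1) * ((t + a + 1)⁻¹ - (t + a)⁻¹) +
      t * (t - 1) * (((t + a) ^ 2)⁻¹ - ((t + a + 1) ^ 2)⁻¹) := by
  have hs : 0 < t + a := add_pos_of_pos_of_nonneg ht ha
  have hrat : 2 * (2 / (2 * (t + a) + 1)) + 2 * (2 * t - 1) * ((t + a + 1)⁻¹ - (t + a)⁻¹) +
      t * (t - 1) * (((t + a) ^ 2)⁻¹ - ((t + a + 1) ^ 2)⁻¹) =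
        ((t + a) * (3 * (t + a) + 1) +
          a * (2 * (t + a) + 1) * (2 * (t + a) * a + 4 * t + 5 * a + 1)) /
        ((2 * (t + a) + 1) * (t + a) ^ 2 * (t + a + 1) ^ 2) := by
    field_simp
    ring
  have hrat_nonneg : 0 ≤ 2 * (2 / (2 * (t + a) + 1)) +
      2 * (2 * t - 1) * ((t + a + 1)⁻¹ - (t + a)⁻¹) +
        t * (t - 1) * (((t + a) ^ 2)⁻¹ - ((t + a + 1) ^ 2)⁻¹) := by
    rw [hrat]
    positivity
  linarith [two_div_two_mul_add_one_le_log_sub_log hs]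

theorem convexOn_logRatioWeight {a : ℝ} (ha : 0 ≤ a) :
    ConvexOn ℝ (Ioi 0) (logRatioWeight a) := by
  have hid : ∀ t : ℝ, HasDerivAt (fun t => t + a) 1 t := fun t =>
    (hasDerivAt_id' t).add_const a
  have hpoly : ∀ t : ℝ, HasDerivAt (fun t => t * (t - 1)) (2 * t - 1) t := fun t =>
    ((hasDerivAt_id' t).fun_mul ((hasDerivAt_id' t).sub_const 1)).congr_deriv (by ring)
  have hL : ∀ t > 0, HasDerivAt (fun t => log (t + a + 1) - log (t + a))
      ((t + a + 1)⁻¹ - (t + a)⁻¹) t := fun t ht => by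
    simpa only [one_div] using
      ((hid t).add_const 1).log (by positivity) |>.fun_sub ((hid t).log (by positivity))
  have hL' : ∀ t > 0, HasDerivAt (fun t => (t + a + 1)⁻¹ - (t + a)⁻¹)
      (((t + a) ^ 2)⁻¹ - ((t + a + 1) ^ 2)⁻¹) t := fun t ht =>
    (((hid t).add_const 1).fun_inv (by positivity) |>.fun_sub
      ((hid t).fun_inv (by positivity))).congr_deriv (by ring)
  have hφ' : ∀ t > 0, HasDerivAt (logRatioWeight a)
      ((2 * t - 1) * (log (t + a + 1) - log (t + a)) +
        t * (t - 1) * ((t + a + 1)⁻¹ - (t + a)⁻¹)) t :=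
    fun t ht => ((hpoly t).fun_mul (hL t ht)).congr_deriv (by ring)
  refine convexOn_of_hasDerivWithinAt2_nonneg (convex_Ioi 0)
    (f' := fun t => (2 * t - 1) * (log (t + a + 1) - log (t + a)) +
      t * (t - 1) * ((t + a + 1)⁻¹ - (t + a)⁻¹))
    (f'' := fun t => 2 * (log (t + a + 1) - log (t + a)) +
      2 * (2 * t - 1) * ((t + a + 1)⁻¹ - (t + a)⁻¹) +
        t * (t - 1) * (((t + a) ^ 2)⁻¹ - ((t + a + 1) ^ 2)⁻¹))
    (fun t ht => (hφ' t ht).continuousAt.continuousWithinAt) ?_ ?_ ?_ <;> rw [interior_Ioi]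
  · exact fun t ht => (hφ' t ht).hasDerivWithinAt
  · intro t ht
    have hlin : HasDerivAt (fun t => 2 * t - 1) 2 t :=
      (((hasDerivAt_id' t).const_mul 2).sub_const 1).congr_deriv (by ring)
    exact ((hlin.fun_mul (hL t ht)).fun_add
      ((hpoly t).fun_mul (hL' t ht))).hasDerivWithinAt.congr_deriv (by ring)
  · exact fun t ht => logRatioWeight_deriv2_nonneg ha ht

theorem logRatioWeight_secondDiff_nonneg {a : ℝ} (ha : 0 ≤ a) (k : ℕ) :
    0 ≤ logRatioWeight a (k + 2) - 2 * logRatioWeight a (k + 1) + logRatioWeight a k := by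
  rcases k with _ | m
  · norm_num [logRatioWeight]
    exact log_le_log (by positivity) (by linarith)
  · have hmid := (convexOn_logRatioWeight ha).2 (show (0 : ℝ) < m + 1 by positivity)
      (show (0 : ℝ) < m + 1 + 2 by positivity) (show (0 : ℝ) ≤ 1 / 2 by norm_num)
      (show (0 : ℝ) ≤ 1 / 2 by norm_num) (by norm_num)
    have hmidpoint : (1 / 2 : ℝ) • ((m : ℝ) + 1) + (1 / 2 : ℝ) • ((m : ℝ) + 1 + 2) = m + 1 + 1 := by
      simp only [smul_eq_mul]; ring
    rw [hmidpoint, smul_eq_mul, smul_eq_mul] at hmid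
    push_cast
    linarith

theorem sq_mul_binPMF (N x : ℕ) (q : ℝ) :
    q ^ 2 * binPMF N q x = (x + 1) * (x + 2) / ((N + 1) * (N + 2)) *
      (bernsteinPolynomial ℝ (N + 2) (x + 2)).eval q := by
  have h1 : ((N + 1) * N.choose x : ℝ) = (N + 1).choose (x + 1) * (x + 1) := by
    exact_mod_cast Nat.add_one_mul_choose_eq N x
  have h2 : ((N + 2) * (N + 1).choose (x + 1) : ℝ) = (N + 2).choose (x + 2) * (x + 2) := by
    exact_mod_cast Nat.add_one_mul_choose_eq (N + 1) (x + 1)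
  simp only [binPMF, bernsteinPolynomial, eval_mul, eval_natCast, eval_pow, eval_X, eval_sub,
    eval_one, Nat.add_sub_add_right]
  field_simp
  linear_combination q ^ (x + 2) * (1 - q) ^ (N - x) * ((N + 2) * h1 + (x + 1) * h2)

theorem neg_log_one_sub_one_div_add_one {s : ℝ} (hs : 0 < s) :
    -log (1 - 1 / (s + 1)) = log (s + 1) - log s := by
  rw [one_sub_div (by positivity), add_sub_cancel_right, log_div hs.ne' (by positivity)]
  ring

theorem sq_mul_sum_binPMF_eq_eval_bernstein (N : ℕ) {a : ℝ} (ha : 0 ≤ a) (q : ℝ) :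
    q ^ 2 * ∑ x ∈ range (N + 1), binPMF N q x * -log (1 - 1 / ((x : ℝ) + 1 + (a + 2))) =
      (∑ k ∈ range (N + 3), C (logRatioWeight a k / ((N + 1) * (N + 2))) *
        bernsteinPolynomial ℝ (N + 2) k).eval q := by
  rw [sum_range_succ' (fun k => C (logRatioWeight a k / _) * _),
    sum_range_succ' (fun k => C (logRatioWeight a (k + 1 : ℕ) / _) * _)]
  simp only [Nat.cast_zero, zero_add, Nat.cast_one, logRatioWeight_zero, logRatioWeight_one,
    zero_div, map_zero, zero_mul, add_zero, eval_finsetSum, mul_sum]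
  refine sum_congr rfl fun x _ => ?_
  rw [show x + 1 + 1 = x + 2 from rfl]
  have hs : (x : ℝ) + 1 + (a + 2) = x + 2 + a + 1 := by ring
  rw [← mul_assoc, sq_mul_binPMF, hs, neg_log_one_sub_one_div_add_one (by positivity), eval_mul,
    eval_C, logRatioWeight]
  push_cast
  ring

theorem H_convex_general (N n : ℕ) (hn : 3 ≤ n) :
    ConvexOn ℝ (Set.Ioo (0 : ℝ) 1)
      (fun q : ℝ => q ^ 2 * ∑ x ∈ Finset.range (N+1),
        binPMF N q x * (- Real.log (1 - 1 / ((x : ℝ) + 1 + (1 + n) / 2)))) := by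
  have ha : 0 ≤ ((n : ℝ) - 3) / 2 := by
    have : (3 : ℝ) ≤ n := by exact_mod_cast hn
    linarith
  have hshift : (1 + (n : ℝ)) / 2 = ((n : ℝ) - 3) / 2 + 2 := by ring
  simp_rw [hshift, sq_mul_sum_binPMF_eq_eval_bernstein N ha]
  refine (bernsteinPolynomial.convexOn_eval_sum_C_mul N _ fun k _ => ?_).subset
    Ioo_subset_Icc_self (convex_Ioo 0 1)
  have h := div_nonneg (logRatioWeight_secondDiff_nonneg ha k)
    (by positivity : (0 : ℝ) ≤ (N + 1) * (N + 2))
  rw [add_div, sub_div, mul_div_assoc] at h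
  exact_mod_cast h

theorem H_convex (N n : ℕ) (hN : 1 ≤ N) (hn : 3 ≤ n) :
    ConvexOn ℝ (Set.Ioo (0 : ℝ) 1)
      (fun q : ℝ => q ^ 2 * ∑ x ∈ Finset.range (N+1),
        binPMF N q x * (- Real.log (1 - 1 / ((x : ℝ) + 1 + (1 + n) / 2)))) :=
  H_convex_general N n hn
end

section
/- Let N be a positive integer and let h : ℤ → ℝ be any function with h(x) = 0 for x < 0. Define F(p) = Σ_{x=0}^N C(N,x) p^x (1−p)^{N−x} h(x) for p ∈ (0,1). Then for every p ∈ (0,1), F'(p) = Σ_{x=0}^N C(N,x) p^x (1−p)^{N−x} (x − Np) h(x) / (p(1−p)) = (1/p) Σ_{x=0}^N C(N,x) p^x (1−p)^{N−x} · x · (h(x) − h(x−1)). -/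
open Finset

lemma natCast_mul_pow_sub_one {K : Type*} [Field K] {p : K} (hp : p ≠ 0) (a : ℕ) :
    (a : K) * p ^ (a - 1) = a * p ^ a / p := by
  cases a with
  | zero => simp
  | succ a => rw [Nat.add_sub_cancel, pow_succ]; field_simp

lemma hasDerivAt_pow_mul_one_sub_pow {𝕜 : Type*} [NontriviallyNormedField 𝕜] (a b : ℕ) {p : 𝕜}
    (hp : p ≠ 0) (hp' : 1 - p ≠ 0) :
    HasDerivAt (fun q : 𝕜 => q ^ a * (1 - q) ^ b)
      (p ^ a * (1 - p) ^ b * ((a - (a + b) * p) / (p * (1 - p)))) p := by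
  have hpow' : HasDerivAt (fun q : 𝕜 => (1 - q) ^ b) (b * (1 - p) ^ (b - 1) * -1) p :=
    ((hasDerivAt_id p).const_sub 1).fun_pow b
  refine ((hasDerivAt_pow a p).mul hpow').congr_deriv ?_
  rw [natCast_mul_pow_sub_one hp, natCast_mul_pow_sub_one hp']
  field_simp
  ring

lemma hasDerivAt_binPMF {N x : ℕ} (hx : x ≤ N) {p : ℝ} (hp : p ≠ 0) (hp' : 1 - p ≠ 0) :
    HasDerivAt (fun q : ℝ => binPMF N q x)
      (binPMF N p x * ((x : ℝ) - N * p) / (p * (1 - p))) p := by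
  have hN : (x : ℝ) + ((N - x : ℕ) : ℝ) = N := by rw [Nat.cast_sub hx]; ring
  have hfun : (fun q : ℝ => binPMF N q x) =
      fun q => (N.choose x : ℝ) * (q ^ x * (1 - q) ^ (N - x)) := by
    funext q; simp only [binPMF, mul_assoc]
  rw [hfun]
  refine ((hasDerivAt_pow_mul_one_sub_pow x (N - x) hp hp').const_mul _).congr_deriv ?_
  rw [hN, binPMF]; ring

lemma binPMF_of_lt {N x : ℕ} (h : N < x) (p : ℝ) : binPMF N p x = 0 := by
  simp [binPMF, Nat.choose_eq_zero_of_lt h]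

lemma mul_binPMF_succ (N x : ℕ) (p : ℝ) :
    (1 - p) * ((x : ℝ) + 1) * binPMF N p (x + 1) = p * ((N : ℝ) - x) * binPMF N p x := by
  rcases le_or_gt N x with hNx | hxN
  · rcases hNx.eq_or_lt with rfl | hlt
    · simp [binPMF_of_lt (Nat.lt_succ_self N)]
    · simp [binPMF_of_lt hlt, binPMF_of_lt (hlt.trans (Nat.lt_succ_self x))]
  · have hchoose : ((x : ℝ) + 1) * N.choose (x + 1) = N.choose x * ((N : ℝ) - x) := by
      rw [← Nat.cast_sub hxN.le, mul_comm]
      exact_mod_cast Nat.choose_succ_right_eq N x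
    have hexp : N - x = (N - (x + 1)) + 1 := by omega
    simp only [binPMF]
    rw [hexp, pow_succ, pow_succ]
    linear_combination (p * p ^ x * (1 - p) * (1 - p) ^ (N - (x + 1))) * hchoose

lemma sum_binPMF_shift (N : ℕ) (p : ℝ) (f : ℕ → ℝ) :
    ∑ x ∈ range (N + 1), p * ((N : ℝ) - x) * binPMF N p x * f (x + 1) =
      ∑ x ∈ range (N + 1), (1 - p) * x * binPMF N p x * f x := by
  set G : ℕ → ℝ := fun x => (1 - p) * x * binPMF N p x * f x
  have hshift : ∀ x, p * ((N : ℝ) - x) * binPMF N p x * f (x + 1) = G (x + 1) := fun x => by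
    simp only [G, ← mul_binPMF_succ]; push_cast; ring
  have hG0 : G 0 = 0 := by simp [G]
  have hGN : G (N + 1) = 0 := by simp [G, binPMF_of_lt (Nat.lt_succ_self N)]
  simp only [hshift]
  linarith [sum_range_succ' G (N + 1), sum_range_succ G (N + 1)]

/-- Binomial analogue of Johnson's lemma. -/
lemma sum_binPMF_mul_sub_mul (N : ℕ) (p : ℝ) (h : ℤ → ℝ) :
    ∑ x ∈ range (N + 1), binPMF N p x * ((x : ℝ) - N * p) * h x =
      (1 - p) * ∑ x ∈ range (N + 1), binPMF N p x * x * (h x - h ((x : ℤ) - 1)) := by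
  have hshift := sum_binPMF_shift N p fun y => h ((y : ℤ) - 1)
  simp only [Nat.cast_succ, add_sub_cancel_right] at hshift
  rw [mul_sum]
  calc ∑ x ∈ range (N + 1), binPMF N p x * ((x : ℝ) - N * p) * h x
      = ∑ x ∈ range (N + 1), ((1 - p) * x * binPMF N p x * h x
          - p * ((N : ℝ) - x) * binPMF N p x * h x) :=
        sum_congr rfl fun x _ => by ring
    _ = _ := by
        rw [sum_sub_distrib, hshift, ← sum_sub_distrib]
        exact sum_congr rfl fun x _ => by ring

theorem binomial_score_identity_general (N : ℕ) (h : ℤ → ℝ)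
    (p : ℝ) (hp : p ∈ Set.Ioo (0 : ℝ) 1) :
    HasDerivAt (fun q : ℝ => ∑ x ∈ Finset.range (N+1), binPMF N q x * h x)
      (∑ x ∈ Finset.range (N+1),
        binPMF N p x * ((x : ℝ) - N * p) * h x / (p * (1 - p))) p ∧
    (∑ x ∈ Finset.range (N+1), binPMF N p x * ((x : ℝ) - N * p) * h x / (p * (1 - p))) =
      (1 / p) * ∑ x ∈ Finset.range (N+1),
        binPMF N p x * (x : ℝ) * (h x - h ((x : ℤ) - 1)) := by
  have hp0 : p ≠ 0 := hp.1.ne'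
  have hp1 : 1 - p ≠ 0 := (sub_pos.mpr hp.2).ne'
  constructor
  · have hterm : ∀ x ∈ range (N + 1), HasDerivAt (fun q : ℝ => binPMF N q x * h x)
        (binPMF N p x * ((x : ℝ) - N * p) / (p * (1 - p)) * h x) p := fun x hx =>
      (hasDerivAt_binPMF (Nat.lt_succ_iff.mp (mem_range.mp hx)) hp0 hp1).mul_const (h x)
    exact (HasDerivAt.fun_sum hterm).congr_deriv (sum_congr rfl fun x _ => by ring)
  · rw [← sum_div, sum_binPMF_mul_sub_mul]
    field_simp

theorem binomial_score_identity (N : ℕ) (hN : 1 ≤ N) (h : ℤ → ℝ)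
    (hneg : ∀ x : ℤ, x < 0 → h x = 0) (p : ℝ) (hp : p ∈ Set.Ioo (0 : ℝ) 1) :
    HasDerivAt (fun q : ℝ => ∑ x ∈ Finset.range (N+1), binPMF N q x * h x)
      (∑ x ∈ Finset.range (N+1),
        binPMF N p x * ((x : ℝ) - N * p) * h x / (p * (1 - p))) p ∧
    (∑ x ∈ Finset.range (N+1), binPMF N p x * ((x : ℝ) - N * p) * h x / (p * (1 - p))) =
      (1 / p) * ∑ x ∈ Finset.range (N+1),
        binPMF N p x * (x : ℝ) * (h x - h ((x : ℤ) - 1)) :=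
  binomial_score_identity_general N h p hp
end

section
/- Let N be a positive integer and let h : ℤ → ℝ be any function with h(x) = 0 for x < 0. Define F(p) = Σ_{x=0}^N C(N,x) p^x (1−p)^{N−x} h(x) and h̃(x) = (x+2)(x+1)h(x) for x ∈ ℤ. Then for every p ∈ (0,1), the second derivative of p ↦ p² F(p) satisfies d²/dp² [p² F(p)] = Σ_{x=0}^N C(N,x) p^x (1−p)^{N−x} [h̃(x) − 2h̃(x−1) + h̃(x−2)]. -/
open Finset

/-!
Writing `b n ν = C(n, ν) X^ν (1 - X)^(n - ν)` for the Bernstein polynomials, the identity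
`(n + 2)(n + 1) X² b n ν = (ν + 2)(ν + 1) b (n+2) (ν+2)` turns `p² F(p)` into
`Σ h̃(x) b (N+2) (x+2) / ((N + 2)(N + 1))`. Differentiating a Bernstein polynomial lowers its
degree and takes a backward difference in the index, so the second derivative is
`Σ h̃(x) (b N x - 2 b N (x+1) + b N (x+2))`. Shifting the summation index moves the difference
onto `h̃`; no boundary terms appear because `b N` vanishes at `N + 1, N + 2` and the factor
`(x + 2)(x + 1)` makes `h̃` vanish at `-1, -2`.
-/

open Polynomial

namespace bernsteinPolynomial

variable {R : Type*} [CommRing R]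

theorem natCast_mul_X_sq_mul (n ν : ℕ) :
    (((n + 2) * (n + 1) : ℕ) : R[X]) * (X ^ 2 * bernsteinPolynomial R n ν) =
      (((ν + 2) * (ν + 1) : ℕ) : R[X]) * bernsteinPolynomial R (n + 2) (ν + 2) := by
  have hchoose :
      (n + 2) * ((n + 1) * n.choose ν) = (n + 2).choose (ν + 2) * (ν + 2) * (ν + 1) := by
    rw [Nat.add_one_mul_choose_eq, ← mul_assoc, Nat.add_one_mul_choose_eq]
  have hcast := congrArg (Nat.cast : ℕ → R[X]) hchoose
  push_cast at hcast
  simp only [bernsteinPolynomial, Nat.add_sub_add_right]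
  push_cast
  linear_combination X ^ (ν + 2) * (1 - X) ^ (n - ν) * hcast

theorem iterate_derivative_two (n ν : ℕ) :
    derivative^[2] (bernsteinPolynomial R (n + 2) (ν + 2)) =
      ((n + 2) * (n + 1) : R[X]) * (bernsteinPolynomial R n ν
        - 2 * bernsteinPolynomial R n (ν + 1) + bernsteinPolynomial R n (ν + 2)) := by
  simp only [Function.iterate_succ, Function.iterate_zero, Function.comp_apply, id,
    derivative_succ, derivative_mul, derivative_sub, derivative_natCast]
  push_cast
  ring

end bernsteinPolynomial

theorem Polynomial.iterate_derivative_X_sq_mul_bernsteinPolynomial {R : Type*} [CommRing R]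
    [IsDomain R] [CharZero R] (n ν : ℕ) :
    derivative^[2] (X ^ 2 * bernsteinPolynomial R n ν) =
      ((ν + 2) * (ν + 1) : R[X]) * (bernsteinPolynomial R n ν
        - 2 * bernsteinPolynomial R n (ν + 1) + bernsteinPolynomial R n (ν + 2)) := by
  have hne : (((n + 2) * (n + 1) : ℕ) : R[X]) ≠ 0 := Nat.cast_ne_zero.mpr (by positivity)
  apply mul_left_cancel₀ hne
  rw [← iterate_derivative_natCast_mul, bernsteinPolynomial.natCast_mul_X_sq_mul,
    iterate_derivative_natCast_mul, bernsteinPolynomial.iterate_derivative_two]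
  push_cast
  ring

theorem Polynomial.iteratedDeriv_eval {𝕜 : Type*} [NontriviallyNormedField 𝕜] (p : 𝕜[X]) (n : ℕ) :
    iteratedDeriv n (fun x => p.eval x) = fun x => (derivative^[n] p).eval x := by
  induction n generalizing p with
  | zero => rfl
  | succ n ih =>
    -- inside `Polynomial`, plain `deriv` would name the lemma `Polynomial.deriv`
    have hderiv : _root_.deriv (fun x => p.eval x) = fun x => p.derivative.eval x := by
      ext x
      exact Polynomial.deriv p
    rw [iteratedDeriv_succ', hderiv, ih, Function.iterate_succ_apply]

theorem Finset.sum_range_mul_shift_succ {R : Type*} [Semiring R] (n : ℕ) (u : ℤ → R) (v : ℕ → R)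
    (hu : u (-1) = 0) (hv : v (n + 1) = 0) :
    ∑ x ∈ range (n + 1), u x * v (x + 1) = ∑ x ∈ range (n + 1), u (x - 1) * v x := by
  rw [sum_range_succ, hv, sum_range_succ']
  simp [hu]

theorem Finset.sum_range_mul_second_difference {R : Type*} [CommRing R] (n : ℕ) (u : ℤ → R)
    (v : ℕ → R) (hu₁ : u (-1) = 0) (hu₂ : u (-2) = 0) (hv₁ : v (n + 1) = 0)
    (hv₂ : v (n + 2) = 0) :
    ∑ x ∈ range (n + 1), u x * (v x - 2 * v (x + 1) + v (x + 2)) =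
      ∑ x ∈ range (n + 1), (u x - 2 * u (x - 1) + u (x - 2)) * v x := by
  have shift₁ := sum_range_mul_shift_succ n u v hu₁ hv₁
  have shift₂ :
      ∑ x ∈ range (n + 1), u x * v (x + 2) = ∑ x ∈ range (n + 1), u (x - 2) * v x := by
    rw [sum_range_mul_shift_succ n u (fun y => v (y + 1)) hu₁ hv₂,
      sum_range_mul_shift_succ n (fun y => u (y - 1)) v (by norm_num [hu₂]) hv₁]
    simp only [sub_sub]
    norm_num
  simp only [mul_add, mul_sub, add_mul, sub_mul, sum_add_distrib, sum_sub_distrib,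
    mul_left_comm _ (2 : R), mul_assoc (2 : R), ← mul_sum, shift₁, shift₂]

theorem binPMF_eq_eval_bernsteinPolynomial (N : ℕ) (q : ℝ) (x : ℕ) :
    binPMF N q x = (bernsteinPolynomial ℝ N x).eval q := by
  simp [binPMF, bernsteinPolynomial]

theorem binPMF_eq_zero_of_lt {N x : ℕ} (q : ℝ) (hx : N < x) : binPMF N q x = 0 := by
  simp [binPMF, Nat.choose_eq_zero_of_lt hx]

theorem second_derivative_identity_general (N : ℕ) (h : ℤ → ℝ)
    (htil : ℤ → ℝ) (hhtil : ∀ x : ℤ, htil x = ((x : ℝ) + 2) * ((x : ℝ) + 1) * h x)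
    (p : ℝ) :
    iteratedDeriv 2
        (fun q : ℝ => q ^ 2 * ∑ x ∈ Finset.range (N+1), binPMF N q x * h x) p =
      ∑ x ∈ Finset.range (N+1),
        binPMF N p x * (htil x - 2 * htil ((x : ℤ) - 1) + htil ((x : ℤ) - 2)) := by
  have hpoly : (fun q : ℝ => q ^ 2 * ∑ x ∈ range (N + 1), binPMF N q x * h x) =
      fun q => (∑ x ∈ range (N + 1), C (h x) * (X ^ 2 * bernsteinPolynomial ℝ N x)).eval q := by
    ext q
    simp only [binPMF_eq_eval_bernsteinPolynomial, eval_finsetSum, eval_mul, eval_C, eval_pow,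
      eval_X, mul_sum]
    exact sum_congr rfl fun x _ => by ring
  calc iteratedDeriv 2 (fun q : ℝ => q ^ 2 * ∑ x ∈ range (N + 1), binPMF N q x * h x) p
      = ∑ x ∈ range (N + 1),
          htil x * (binPMF N p x - 2 * binPMF N p (x + 1) + binPMF N p (x + 2)) := by
        rw [hpoly, iteratedDeriv_eval, iterate_derivative_sum]
        simp only [iterate_derivative_C_mul, iterate_derivative_X_sq_mul_bernsteinPolynomial,
          eval_finsetSum, eval_mul, eval_C, eval_sub, eval_add, eval_natCast, eval_ofNat,
          eval_one, ← binPMF_eq_eval_bernsteinPolynomial]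
        refine sum_congr rfl fun x _ => ?_
        rw [hhtil]
        push_cast
        ring
    _ = ∑ x ∈ range (N + 1), (htil x - 2 * htil (x - 1) + htil (x - 2)) * binPMF N p x :=
        sum_range_mul_second_difference N htil (binPMF N p) (by norm_num [hhtil])
          (by norm_num [hhtil]) (binPMF_eq_zero_of_lt p (by omega))
          (binPMF_eq_zero_of_lt p (by omega))
    _ = _ := sum_congr rfl fun _ _ => mul_comm _ _

theorem second_derivative_identity (N : ℕ) (hN : 1 ≤ N) (h : ℤ → ℝ)
    (hneg : ∀ x : ℤ, x < 0 → h x = 0)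
    (htil : ℤ → ℝ) (hhtil : ∀ x : ℤ, htil x = ((x : ℝ) + 2) * ((x : ℝ) + 1) * h x)
    (p : ℝ) (hp : p ∈ Set.Ioo (0 : ℝ) 1) :
    iteratedDeriv 2
        (fun q : ℝ => q ^ 2 * ∑ x ∈ Finset.range (N+1), binPMF N q x * h x) p =
      ∑ x ∈ Finset.range (N+1),
        binPMF N p x * (htil x - 2 * htil ((x : ℤ) - 1) + htil ((x : ℤ) - 2)) :=
  second_derivative_identity_general N h htil hhtil p
end

section
/- Let ν ≥ 2 be a real number. Then the function h̃ : [0, ∞) → ℝ defined by h̃(x) = (x² + 3x + 2) · log((x + 1 + ν)/(x + ν)) satisfies h̃''(x) ≥ 0 for all x ≥ 0; in particular h̃ is convex on [0, ∞). -/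
/-!
With `a = x + ν`, the second derivative is
`h̃'' = 2 log (1 + 1/a) - 2 (2x + 3) / (a (a + 1)) + (x + 1) (x + 2) (2a + 1) / (a (a + 1))²`.
The Padé bound `log (1 + 1/a) ≥ 2 / (2a + 1)` reduces `h̃'' ≥ 0` to the nonnegativity of a
polynomial in `x` and `ν - 2` whose coefficients are all nonnegative; convexity then follows from
the second-derivative test.
-/

open Real Set Topology

noncomputable def htilde (ν x : ℝ) : ℝ :=
  (x ^ 2 + 3 * x + 2) * log ((x + 1 + ν) / (x + ν))

noncomputable def htildeDeriv (ν x : ℝ) : ℝ :=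
  (2 * x + 3) * log ((x + 1 + ν) / (x + ν)) - (x ^ 2 + 3 * x + 2) / ((x + ν) * (x + 1 + ν))

noncomputable def htildeDeriv2 (ν x : ℝ) : ℝ :=
  2 * log ((x + 1 + ν) / (x + ν)) - 2 * (2 * x + 3) / ((x + ν) * (x + 1 + ν))
    + (x ^ 2 + 3 * x + 2) * (2 * x + 2 * ν + 1) / ((x + ν) * (x + 1 + ν)) ^ 2

section Derivatives

variable {ν x : ℝ}

theorem hasDerivAt_sq_add_three_mul_add_two (x : ℝ) :
    HasDerivAt (fun x : ℝ => x ^ 2 + 3 * x + 2) (2 * x + 3) x :=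
  (((hasDerivAt_pow 2 x).add ((hasDerivAt_id' x).const_mul 3)).add_const 2).congr_deriv
    (by norm_num)

theorem hasDerivAt_log_add_one_div (ha : x + ν ≠ 0) (hb : x + 1 + ν ≠ 0) :
    HasDerivAt (fun x => log ((x + 1 + ν) / (x + ν))) (-((x + ν) * (x + 1 + ν))⁻¹) x := by
  have hquot : HasDerivAt (fun x => (x + 1 + ν) / (x + ν))
      ((1 * (x + ν) - (x + 1 + ν) * 1) / (x + ν) ^ 2) x :=
    (((hasDerivAt_id' x).add_const 1).add_const ν).div ((hasDerivAt_id' x).add_const ν) ha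
  refine (hquot.log (div_ne_zero hb ha)).congr_deriv ?_
  field_simp
  ring

theorem hasDerivAt_htilde (ha : x + ν ≠ 0) (hb : x + 1 + ν ≠ 0) :
    HasDerivAt (htilde ν) (htildeDeriv ν x) x := by
  refine ((hasDerivAt_sq_add_three_mul_add_two x).mul
    (hasDerivAt_log_add_one_div ha hb)).congr_deriv ?_
  rw [htildeDeriv, div_eq_mul_inv]
  ring

theorem hasDerivAt_htildeDeriv (ha : x + ν ≠ 0) (hb : x + 1 + ν ≠ 0) :
    HasDerivAt (htildeDeriv ν) (htildeDeriv2 ν x) x := by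
  have hlin : HasDerivAt (fun x : ℝ => 2 * x + 3) 2 x :=
    (((hasDerivAt_id' x).const_mul 2).add_const 3).congr_deriv (mul_one 2)
  have hden : HasDerivAt (fun x => (x + ν) * (x + 1 + ν)) (2 * x + 2 * ν + 1) x :=
    (((hasDerivAt_id' x).add_const ν).mul
      (((hasDerivAt_id' x).add_const 1).add_const ν)).congr_deriv (by ring)
  refine ((hlin.mul (hasDerivAt_log_add_one_div ha hb)).sub
    ((hasDerivAt_sq_add_three_mul_add_two x).div hden (mul_ne_zero ha hb))).congr_deriv ?_
  rw [htildeDeriv2]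
  field_simp
  ring

end Derivatives

theorem two_div_two_mul_add_one_le_log_add_one_div {a : ℝ} (ha : 0 < a) :
    2 / (2 * a + 1) ≤ log ((a + 1) / a) := by
  convert le_log_one_add_of_nonneg (inv_nonneg.2 ha.le) using 1
  · field_simp
    ring
  · congr 1; field_simp

theorem htildeDeriv2_nonneg {ν x : ℝ} (hν : 2 ≤ ν) (hx : 0 ≤ x) : 0 ≤ htildeDeriv2 ν x := by
  have ha : 0 < x + ν := by linarith
  have hlog : 2 / (2 * x + 2 * ν + 1) ≤ log ((x + 1 + ν) / (x + ν)) := by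
    convert two_div_two_mul_add_one_le_log_add_one_div ha using 2 <;> ring
  have hnum : 0 ≤ 4 * ((x + ν) * (x + 1 + ν)) ^ 2
      - 2 * (2 * x + 3) * ((x + ν) * (x + 1 + ν)) * (2 * x + 2 * ν + 1)
      + (x ^ 2 + 3 * x + 2) * (2 * x + 2 * ν + 1) ^ 2 := by
    obtain ⟨t, ht, rfl⟩ : ∃ t, 0 ≤ t ∧ ν = t + 2 := ⟨ν - 2, by linarith, by ring⟩
    ring_nf
    positivity
  calc 0 ≤ (4 * ((x + ν) * (x + 1 + ν)) ^ 2
        - 2 * (2 * x + 3) * ((x + ν) * (x + 1 + ν)) * (2 * x + 2 * ν + 1)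
        + (x ^ 2 + 3 * x + 2) * (2 * x + 2 * ν + 1) ^ 2)
        / ((2 * x + 2 * ν + 1) * ((x + ν) * (x + 1 + ν)) ^ 2) := by positivity
    _ = 2 * (2 / (2 * x + 2 * ν + 1)) - 2 * (2 * x + 3) / ((x + ν) * (x + 1 + ν))
        + (x ^ 2 + 3 * x + 2) * (2 * x + 2 * ν + 1) / ((x + ν) * (x + 1 + ν)) ^ 2 := by
      field_simp
      ring
    _ ≤ htildeDeriv2 ν x := by
      rw [htildeDeriv2]
      gcongr

theorem iteratedDeriv_two_htilde {ν x : ℝ} (hx : -ν < x) :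
    iteratedDeriv 2 (htilde ν) x = htildeDeriv2 ν x := by
  have hderiv : deriv (htilde ν) =ᶠ[𝓝 x] htildeDeriv ν := by
    filter_upwards [Ioi_mem_nhds hx] with y (hy : -ν < y)
    exact (hasDerivAt_htilde (by linarith : 0 < y + ν).ne'
      (by linarith : 0 < y + 1 + ν).ne').deriv
  rw [iteratedDeriv_succ, iteratedDeriv_one, hderiv.deriv_eq]
  exact (hasDerivAt_htildeDeriv (by linarith : 0 < x + ν).ne'
    (by linarith : 0 < x + 1 + ν).ne').deriv

theorem htilde_convex (ν : ℝ) (hν : 2 ≤ ν) :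
    (∀ x : ℝ, 0 ≤ x →
      0 ≤ iteratedDeriv 2
            (fun x : ℝ => (x ^ 2 + 3 * x + 2) * Real.log ((x + 1 + ν) / (x + ν))) x) ∧
    ConvexOn ℝ (Set.Ici (0 : ℝ))
      (fun x : ℝ => (x ^ 2 + 3 * x + 2) * Real.log ((x + 1 + ν) / (x + ν))) := by
  change (∀ x : ℝ, 0 ≤ x → 0 ≤ iteratedDeriv 2 (htilde ν) x) ∧ ConvexOn ℝ (Ici 0) (htilde ν)
  have hne : ∀ x ∈ Ici (0 : ℝ), x + ν ≠ 0 ∧ x + 1 + ν ≠ 0 := fun x (hx : 0 ≤ x) =>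
    ⟨(by linarith : 0 < x + ν).ne', (by linarith : 0 < x + 1 + ν).ne'⟩
  refine ⟨fun x hx => ?_, ?_⟩
  · rw [iteratedDeriv_two_htilde (by linarith)]
    exact htildeDeriv2_nonneg hν hx
  refine convexOn_of_hasDerivWithinAt2_nonneg (f' := htildeDeriv ν) (convex_Ici 0)
    (fun x hx => (hasDerivAt_htilde (hne x hx).1 (hne x hx).2).continuousAt.continuousWithinAt)
    (fun x hx => ?_) (fun x hx => ?_) (fun x hx => htildeDeriv2_nonneg hν (interior_subset hx))
  · obtain ⟨ha, hb⟩ := hne x (interior_subset hx)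
    exact (hasDerivAt_htilde ha hb).hasDerivWithinAt
  · obtain ⟨ha, hb⟩ := hne x (interior_subset hx)
    exact (hasDerivAt_htildeDeriv ha hb).hasDerivWithinAt
end

section
/- For every real number ν ≥ 2, log(1 + 1/(1 + ν)) − (2/3) · log(1 + 1/ν) ≥ 0. -/
theorem second_difference_at_zero (ν : ℝ) (hν : 2 ≤ ν) :
    0 ≤ Real.log (1 + 1 / (1 + ν)) - 2 / 3 * Real.log (1 + 1 / ν) := by
  have h1 : (0:ℝ) < ν := by linarith
  have h2 : (0:ℝ) < 1 + ν := by linarith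
  have e1 : 1 + 1 / ν = (1 + ν) / ν := by field_simp; ring
  have e2 : 1 + 1 / (1 + ν) = (2 + ν) / (1 + ν) := by field_simp; ring
  have key : (1 + 1 / ν) ^ 2 ≤ (1 + 1 / (1 + ν)) ^ 3 := by
    rw [e1, e2, div_pow, div_pow, div_le_div_iff₀ (by positivity) (by positivity)]
    nlinarith [sq_nonneg ν, sq_nonneg (ν - 2)]
  have hBpos : (0:ℝ) < 1 + 1 / ν := by positivity
  have hlog := Real.log_le_log (by positivity) key
  rw [Real.log_pow, Real.log_pow] at hlog
  push_cast at hlog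
  linarith
end

section
/- Let N be a nonnegative integer, p ∈ (0,1), and let a > 1 be a real number. Then Σ_{x=0}^N C(N,x) p^x (1−p)^{N−x} · (−log(1 − 1/(x + a))) = ∫₀^∞ ((e^t − 1)/t) · e^{−at} · (1 − p + p e^{−t})^N dt. -/
open Finset MeasureTheory

/-!
By Frullani's integral for `exp (-x)`, for `y > 1`
`-log (1 - 1 / y) = log (y / (y - 1)) = ∫₀^∞ t⁻¹ (e^{-(y-1)t} - e^{-yt}) dt`,
and at `y = x + a` this integrand is `(e^t - 1) / t · e^{-at} · (e^{-t})^x`. Averaging over `x`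
with the binomial weights and exchanging the finite sum with the integral turns `(e^{-t})^x`
into the moment generating function `(1 - p + p e^{-t})^N`.
-/

open Real Set

lemma exp_neg_mul_sub_exp_neg_mul_le (c d t : ℝ) :
    exp (-(c * t)) - exp (-(d * t)) ≤ (d - c) * t * exp (-(c * t)) := by
  have hsplit : exp (-(d * t)) = exp (-(c * t)) * exp (-((d - c) * t)) := by
    rw [← exp_add]; ring_nf
  nlinarith [one_sub_le_exp_neg ((d - c) * t), exp_pos (-(c * t))]

lemma integrableOn_inv_mul_exp_neg_mul_sub {c d : ℝ} (hc : 0 < c) (hd : 0 < d) :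
    IntegrableOn (fun t => t⁻¹ * (exp (-(c * t)) - exp (-(d * t)))) (Ioi 0) := by
  wlog hcd : c ≤ d generalizing c d
  · exact (this hd hc (le_of_not_ge hcd)).neg.congr_fun
      (fun t _ => by simp only [Pi.neg_apply]; ring) measurableSet_Ioi
  refine Integrable.mono' ((exp_neg_integrableOn_Ioi 0 hc).const_mul (d - c))
    (by fun_prop) ((ae_restrict_iff' measurableSet_Ioi).mpr (.of_forall fun t (ht : 0 < t) => ?_))
  have hle : exp (-(d * t)) ≤ exp (-(c * t)) := exp_le_exp.mpr (by nlinarith)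
  rw [Real.norm_of_nonneg (by have := inv_pos.mpr ht; nlinarith), neg_mul, inv_mul_le_iff₀ ht]
  nlinarith [exp_neg_mul_sub_exp_neg_mul_le c d t]

lemma integral_inv_mul_exp_neg_mul_sub {c d : ℝ} (hc : 0 < c) (hd : 0 < d) :
    ∫ t in Ioi 0, t⁻¹ * (exp (-(c * t)) - exp (-(d * t))) = log (d / c) := by
  have hf : Continuous fun x : ℝ => exp (-x) := by fun_prop
  simpa using Frullani.integral_Ioi_eq (f := fun x => exp (-x)) (L := 1) (R := 0)
    (hf.locallyIntegrable.locallyIntegrableOn _) hc hd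
    (by simpa using hf.continuousWithinAt (s := Ioi 0) (x := 0) |>.tendsto)
    tendsto_exp_neg_atTop_nhds_zero (integrableOn_inv_mul_exp_neg_mul_sub hc hd)

lemma neg_log_one_sub_inv_eq_integral {y : ℝ} (hy : 1 < y) :
    -log (1 - 1 / y) = ∫ t in Ioi 0, t⁻¹ * (exp (-((y - 1) * t)) - exp (-(y * t))) := by
  rw [integral_inv_mul_exp_neg_mul_sub (by linarith) (by linarith), ← log_inv]
  congr 1
  field_simp

lemma sum_binPMF_mul_pow (N : ℕ) (q r : ℝ) :
    ∑ x ∈ range (N + 1), binPMF N q x * r ^ x = (1 - q + q * r) ^ N := by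
  rw [show 1 - q + q * r = q * r + (1 - q) by ring, add_pow]
  refine sum_congr rfl fun x _ => ?_
  simp only [binPMF, mul_pow]
  ring

lemma inv_mul_exp_neg_mul_sub_eq (a t : ℝ) (x : ℕ) :
    t⁻¹ * (exp (-((x + a - 1) * t)) - exp (-((x + a) * t)))
      = (exp t - 1) / t * exp (-a * t) * exp (-t) ^ x := by
  have hshift : exp (-((x + a - 1) * t)) = exp t * exp (-((x + a) * t)) := by
    rw [← exp_add]; ring_nf
  have hsplit : exp (-((x + a) * t)) = exp (-a * t) * exp (-t) ^ x := by
    rw [← exp_nat_mul, ← exp_add]; ring_nf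
  rw [hshift, hsplit, div_eq_inv_mul]
  ring

lemma integrand_eq_sum_binPMF_mul (N : ℕ) (p a t : ℝ) :
    (exp t - 1) / t * exp (-a * t) * (1 - p + p * exp (-t)) ^ N
      = ∑ x ∈ range (N + 1),
          binPMF N p x * (t⁻¹ * (exp (-((x + a - 1) * t)) - exp (-((x + a) * t)))) := by
  simp_rw [inv_mul_exp_neg_mul_sub_eq, ← sum_binPMF_mul_pow, mul_sum]
  exact sum_congr rfl fun x _ => by ring

theorem binomial_log_moment_integral_general (N : ℕ) (p : ℝ)
    (a : ℝ) (ha : 1 < a) :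
    ∑ x ∈ Finset.range (N+1),
        binPMF N p x * (- Real.log (1 - 1 / ((x : ℝ) + a))) =
      ∫ t in Set.Ioi (0 : ℝ),
        (Real.exp t - 1) / t * Real.exp (-a * t) * (1 - p + p * Real.exp (-t)) ^ N := by
  have hy : ∀ x : ℕ, 1 < (x : ℝ) + a := fun x => by linarith [x.cast_nonneg (α := ℝ)]
  simp_rw [integrand_eq_sum_binPMF_mul]
  rw [integral_finsetSum _ fun x _ =>
    (integrableOn_inv_mul_exp_neg_mul_sub (by linarith [hy x]) (by linarith [hy x])).const_mul _]
  refine sum_congr rfl fun x _ => ?_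
  rw [integral_const_mul, neg_log_one_sub_inv_eq_integral (hy x)]

theorem binomial_log_moment_integral (N : ℕ) (p : ℝ) (hp : p ∈ Set.Ioo (0 : ℝ) 1)
    (a : ℝ) (ha : 1 < a) :
    ∑ x ∈ Finset.range (N+1),
        binPMF N p x * (- Real.log (1 - 1 / ((x : ℝ) + a))) =
      ∫ t in Set.Ioi (0 : ℝ),
        (Real.exp t - 1) / t * Real.exp (-a * t) * (1 - p + p * Real.exp (-t)) ^ N :=
  binomial_log_moment_integral_general N p a ha
end

section
/- Fix integers n ≥ 3 and N ≥ 1, set ν = (1+n)/2, and for each positive integer m define Δ*(m, N) = log(1 + 1/(N + (1+m)ν)) − (1/(1+m)) · Σ_{x=0}^N C(N,x) (1/(1+m))^x (m/(1+m))^{N−x} · (−log(1 − 1/(x + 1 + ν))). Then the limit lim_{m→∞} (1 + m) · Δ*(m, N) exists and is strictly positive; in particular, the estimator p̂ does not dominate p̃ uniformly in m (as m → ∞). -/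
/-!
Multiplying `Δ*(m, N)` by `1 + m` splits it into `(1 + m) log(1 + 1/(N + (1 + m)ν))`, which tends
to `1/ν`, minus a Binomial(N, 1/(1+m)) expectation, which concentrates at `x = 0` and so tends to
`-log(1 - 1/(1 + ν)) = log(1 + 1/ν)`. The limit `1/ν - log(1 + 1/ν)` is positive because
`log(1 + t) < t` for `t > 0`.
-/

open Finset Filter Topology

theorem tendsto_div_add_mul_atTop {a : ℝ} (ha : 0 < a) (b : ℝ) :
    Tendsto (fun t : ℝ => t / (b + t * a)) atTop (𝓝 (1 / a)) := by
  have h : Tendsto (fun t : ℝ => (b / t + a)⁻¹) atTop (𝓝 (1 / a)) := by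
    simpa [one_div] using
      ((tendsto_const_nhds.div_atTop tendsto_id).add_const a).inv₀ (by simpa using ha.ne')
  refine h.congr' ?_
  filter_upwards [eventually_ne_atTop 0] with t ht
  field_simp

theorem tendsto_mul_log_one_add_inv_add_mul {a : ℝ} (ha : 0 < a) (b : ℝ) :
    Tendsto (fun t : ℝ => t * Real.log (1 + 1 / (b + t * a))) atTop (𝓝 (1 / a)) := by
  have hu : Tendsto (fun t : ℝ => b + t * a) atTop atTop :=
    tendsto_atTop_add_const_left _ _ (tendsto_id.atTop_mul_const ha)
  have hlog := (Real.tendsto_mul_log_one_add_div_atTop 1).comp hu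
  simpa using ((tendsto_div_add_mul_atTop ha b).mul hlog).congr' <| by
    filter_upwards [hu.eventually_ne_atTop 0] with t ht
    simp only [Function.comp_apply]
    field_simp

theorem tendsto_sum_choose_mul_pow_mul_pow {α : Type*} {l : Filter α} {p q : α → ℝ}
    (hp : Tendsto p l (𝓝 0)) (hq : Tendsto q l (𝓝 1)) (N : ℕ) (f : ℕ → ℝ) :
    Tendsto (fun a => ∑ x ∈ range (N + 1), (N.choose x : ℝ) * p a ^ x * q a ^ (N - x) * f x)
      l (𝓝 (f 0)) := by
  have hlim : ∑ x ∈ range (N + 1), (N.choose x : ℝ) * 0 ^ x * 1 ^ (N - x) * f x = f 0 := by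
    rw [sum_eq_single_of_mem 0 (by simp)]
    · simp
    · intro x _ hx
      simp [zero_pow hx]
  rw [← hlim]
  exact tendsto_finsetSum _ fun x _ =>
    ((tendsto_const_nhds.mul (hp.pow x)).mul (hq.pow (N - x))).mul tendsto_const_nhds

theorem neg_log_one_sub_inv_one_add {ν : ℝ} (hν : 0 < ν) :
    -Real.log (1 - 1 / (1 + ν)) = Real.log (1 + 1 / ν) := by
  have h : 1 - 1 / (1 + ν) = (1 + 1 / ν)⁻¹ := by
    field_simp
    ring
  rw [h, Real.log_inv, neg_neg]

theorem no_dominance_large_m_general (n N : ℕ) :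
    ∃ L : ℝ,
      Tendsto
        (fun m : ℕ => (1 + (m : ℝ)) *
          (Real.log (1 + 1 / ((N : ℝ) + (1 + m) * ((1 + n) / 2))) -
            1 / (1 + (m : ℝ)) *
              ∑ x ∈ Finset.range (N+1),
                (N.choose x : ℝ) * (1 / (1 + (m : ℝ))) ^ x *
                  ((m : ℝ) / (1 + (m : ℝ))) ^ (N - x) *
                  (- Real.log (1 - 1 / ((x : ℝ) + 1 + (1 + n) / 2)))))
        atTop (nhds L) ∧ 0 < L := by
  set ν : ℝ := (1 + n) / 2
  have hν : 0 < ν := by positivity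
  have hlog_lt : Real.log (1 + 1 / ν) < 1 / ν := by
    simpa using Real.log_lt_sub_one_of_pos (x := 1 + 1 / ν) (by positivity) (by simp [hν.ne'])
  refine ⟨1 / ν - Real.log (1 + 1 / ν), ?_, sub_pos.2 hlog_lt⟩
  have hm : Tendsto (fun m : ℕ => 1 + (m : ℝ)) atTop atTop :=
    tendsto_atTop_add_const_left _ 1 tendsto_natCast_atTop_atTop
  have hfirst := (tendsto_mul_log_one_add_inv_add_mul hν N).comp hm
  have hp : Tendsto (fun m : ℕ => 1 / (1 + (m : ℝ))) atTop (𝓝 0) := by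
    simpa only [add_comm] using tendsto_one_div_add_atTop_nhds_zero_nat
  have hq : Tendsto (fun m : ℕ => (m : ℝ) / (1 + m)) atTop (𝓝 1) := by
    simpa only [add_comm] using tendsto_natCast_div_add_atTop (1 : ℝ)
  have hsum := tendsto_sum_choose_mul_pow_mul_pow hp hq N
    fun x => -Real.log (1 - 1 / ((x : ℝ) + 1 + ν))
  simp only [Nat.cast_zero, zero_add, neg_log_one_sub_inv_one_add hν] at hsum
  refine (hfirst.sub hsum).congr fun m => ?_
  have hm0 : (1 + (m : ℝ)) ≠ 0 := by positivity
  simp only [Function.comp_apply]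
  rw [mul_sub, ← mul_assoc, mul_one_div_cancel hm0, one_mul]

theorem no_dominance_large_m (n N : ℕ) (hn : 3 ≤ n) (hN : 1 ≤ N) :
    ∃ L : ℝ,
      Tendsto
        (fun m : ℕ => (1 + (m : ℝ)) *
          (Real.log (1 + 1 / ((N : ℝ) + (1 + m) * ((1 + n) / 2))) -
            1 / (1 + (m : ℝ)) *
              ∑ x ∈ Finset.range (N+1),
                (N.choose x : ℝ) * (1 / (1 + (m : ℝ))) ^ x *
                  ((m : ℝ) / (1 + (m : ℝ))) ^ (N - x) *
                  (- Real.log (1 - 1 / ((x : ℝ) + 1 + (1 + n) / 2)))))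
        atTop (nhds L) ∧ 0 < L :=
  no_dominance_large_m_general n N
end

section
/- Fix an integer m ≥ 1 and, treating n as a real variable, define the function D(n) = log(1 + 1/(1 + (1+m)(1+n)/2)) − (1/(1+m)) · [ (m/(1+m)) · (−log(1 − 1/(1 + (1+n)/2))) + (1/(1+m)) · (−log(1 − 1/(2 + (1+n)/2))) ] for n ≥ 3. Then dD/dn < 0 for all real n ≥ 3; in particular, since this is the risk difference Δ_{p*}(1,1) when N = 1, the estimator p̂ does not dominate p̃ when N = 1. -/
/-!
With t = (1 + n) / 2 and φ(s) = log (1 + 1 / s), both expectations are values of φ, so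
D(n) = φ(1 + (1 + m) t) - (φ(t) m / (1 + m) + φ(t + 1) / (1 + m)) / (1 + m).
Since φ'(s) = -1 / (s (s + 1)), clearing denominators gives dD/dt the sign of
-m (u² + 2 (m - 1) u - 4) with u = (1 + m) t, which is negative once m ≥ 1 and u > 2.
-/

open Real

theorem neg_log_one_sub_one_div_one_add (t : ℝ) : -log (1 - 1 / (1 + t)) = log (1 + 1 / t) := by
  rcases eq_or_ne t 0 with rfl | ht
  · simp
  rcases eq_or_ne (1 + t) 0 with ht1 | ht1
  · rw [show t = -1 by linarith]; norm_num
  rw [← log_inv, one_sub_div ht1, one_add_div ht, inv_div, add_sub_cancel_left, add_comm]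

theorem hasDerivAt_log_one_add_one_div {s : ℝ} (hs : s ≠ 0) (hs1 : s + 1 ≠ 0) :
    HasDerivAt (fun s => log (1 + 1 / s)) (-1 / (s * (s + 1))) s := by
  have h : 1 + s⁻¹ ≠ 0 := by
    rw [← one_div, one_add_div hs]; exact div_ne_zero hs1 hs
  convert ((hasDerivAt_inv hs).const_add 1).log h using 1
  · ext; simp
  · field_simp

noncomputable def riskDifference (m t : ℝ) : ℝ :=
  log (1 + 1 / (1 + (1 + m) * t)) -
    1 / (1 + m) * (m / (1 + m) * log (1 + 1 / t) + 1 / (1 + m) * log (1 + 1 / (1 + t)))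

theorem hasDerivAt_riskDifference {m t : ℝ} (hm : 0 ≤ m) (ht : 0 < t) :
    HasDerivAt (riskDifference m)
      (-m * (((1 + m) * t) ^ 2 + 2 * (m - 1) * ((1 + m) * t) - 4) /
        ((1 + m) ^ 2 * (t * (t + 1) * (t + 2)) * ((1 + (1 + m) * t) * (2 + (1 + m) * t)))) t := by
  have hMt : 0 < (1 + m) * t := by positivity
  have h1 := (hasDerivAt_log_one_add_one_div (by positivity) (by positivity)).comp t
    (((hasDerivAt_id t).const_mul (1 + m)).const_add 1)
  have h2 := hasDerivAt_log_one_add_one_div ht.ne' (by positivity)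
  have h3 := (hasDerivAt_log_one_add_one_div (by positivity) (by positivity)).comp t
    ((hasDerivAt_id t).const_add 1)
  exact (h1.sub (((h2.const_mul (m / (1 + m))).add (h3.const_mul (1 / (1 + m)))).const_mul
    (1 / (1 + m)))).congr_deriv (by simp only [id_eq]; field_simp; ring)

theorem deriv_riskDifference_neg {m t : ℝ} (hm : 1 ≤ m) (ht : 1 < t) :
    deriv (riskDifference m) t < 0 := by
  rw [(hasDerivAt_riskDifference (by linarith) (by linarith)).deriv]
  have hu : 2 < (1 + m) * t := by nlinarith
  refine div_neg_of_neg_of_pos ?_ (by positivity)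
  nlinarith [mul_pos (by linarith : 0 < m) (by nlinarith : 0 < ((1 + m) * t) ^ 2 - 4),
    mul_nonneg (mul_nonneg (by linarith : 0 ≤ m) (by linarith : 0 ≤ m - 1))
      (by linarith : 0 ≤ (1 + m) * t)]

theorem no_dominance_N_eq_one (m : ℕ) (hm : 1 ≤ m) :
    ∀ x : ℝ, 3 ≤ x →
      deriv
        (fun n : ℝ =>
          Real.log (1 + 1 / (1 + (1 + (m : ℝ)) * (1 + n) / 2)) -
            1 / (1 + (m : ℝ)) *
              ((m : ℝ) / (1 + (m : ℝ)) * (- Real.log (1 - 1 / (1 + (1 + n) / 2))) +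
                1 / (1 + (m : ℝ)) * (- Real.log (1 - 1 / (2 + (1 + n) / 2))))) x < 0 := by
  intro x hx
  have hm' : (1 : ℝ) ≤ m := by exact_mod_cast hm
  simp only [mul_div_assoc, show ∀ n : ℝ, 2 + (1 + n) / 2 = 1 + (1 + (1 + n) / 2) from
    fun n => by ring, neg_log_one_sub_one_div_one_add]
  change deriv (fun n => riskDifference m ((1 + n) / 2)) x < 0
  have hcomp := (hasDerivAt_riskDifference (m := m) (by linarith)
    (by linarith : (0 : ℝ) < (1 + x) / 2)).differentiableAt.hasDerivAt.comp x
    (((hasDerivAt_id' x).const_add 1).div_const 2)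
  exact hcomp.deriv.trans_lt
    (mul_neg_of_neg_of_pos (deriv_riskDifference_neg hm' (by linarith)) (by norm_num))
end
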